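/- arXiv:0704.1783 — 4 statements merged into one kernel-verified Lean document; each statement's English description precedes it below -/
import Mathlib

section
/- In a c-semiring where × is idempotent, + distributes over ×: a + (b × c) = (a + b) × (a + c) for all a, b, c. -/
/-- A c-semiring: `add` is commutative, associative, idempotent, with unit `z`
and absorbing element `o`; `mul` is commutative, associative, distributes over
`add`, with unit `o` and absorbing element `z`. -/
structure IsCSemiring {A : Type*} (add mul : A → A → A) (z o : A) : Prop where
  add_comm : ∀ a b, add a b = add b a
  add_assoc : ∀ a b c, add (add a b) c = add a (add b c)
  add_idem : ∀ a, add a a = a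
  add_zero : ∀ a, add a z = a
  add_one : ∀ a, add a o = o
  mul_comm : ∀ a b, mul a b = mul b a
  mul_assoc : ∀ a b c, mul (mul a b) c = mul a (mul b c)
  mul_distrib : ∀ a b c, mul a (add b c) = add (mul a b) (mul a c)
  mul_one : ∀ a, mul a o = a
  mul_zero : ∀ a, mul a z = z

/-- In a c-semiring with idempotent ×, + distributes over ×. -/
theorem cSemiring_add_distrib_mul {A : Type*} (add mul : A → A → A) (z o : A)
    (h : IsCSemiring add mul z o) (hidem : ∀ a : A, mul a a = a) :
    ∀ a b c : A, add a (mul b c) = mul (add a b) (add a c) := by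
  intro a b c
  have key : mul (add a b) (add a c)
      = add (add (mul a a) (mul a b)) (add (mul a c) (mul b c)) := by
    rw [h.mul_distrib, h.mul_comm (add a b) a, h.mul_comm (add a b) c,
      h.mul_distrib, h.mul_distrib, h.mul_comm c a, h.mul_comm c b]
  rw [key, hidem a]
  have habs : ∀ x, add a (mul a x) = a := by
    intro x
    calc add a (mul a x) = add (mul a o) (mul a x) := by rw [h.mul_one]
      _ = mul a (add o x) := (h.mul_distrib a o x).symm
      _ = mul a o := by rw [h.add_comm o x, h.add_one]
      _ = a := h.mul_one a
  rw [habs, ← h.add_assoc, habs]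
end

section
/- Given a c-semiring S = ⟨A, +, ×, 0, 1⟩, the Hoare power domain structure P^H(S) = ⟨P^H(A), ⊎, ×*, ∅, A⟩ is a c-semiring, where P^H(A) is the set of downward-closed subsets of A under ≤_S, ⊎ is set union, and X ×* Y = the downward closure of {x × y : x ∈ X, y ∈ Y}. -/
/-- Downward-closed set w.r.t. the induced order y ≤_S x iff add y x = x. -/
def DownClosed {A : Type*} (add : A → A → A) (X : Set A) : Prop :=
  ∀ x ∈ X, ∀ y, add y x = x → y ∈ X

/-- X ×* Y : the downward closure of {x × y : x ∈ X, y ∈ Y}. -/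
def prodOp {A : Type*} (add mul : A → A → A) (X Y : Set A) : Set A :=
  {z | ∃ x ∈ X, ∃ y ∈ Y, add z (mul x y) = mul x y}

/-- The Hoare power domain P^H(S) = ⟨downward-closed subsets of A, ∪, ×*, ∅, A⟩
of a c-semiring S is a c-semiring. -/
theorem hoare_powerDomain_cSemiring {A : Type*} (add mul : A → A → A) (z o : A)
    (h : IsCSemiring add mul z o) :
    (∀ X Y : Set A, DownClosed add X → DownClosed add Y → DownClosed add (X ∪ Y)) ∧
    (∀ X Y : Set A, DownClosed add X → DownClosed add Y →
      DownClosed add (prodOp add mul X Y)) ∧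
    (∀ X Y : Set A, X ∪ Y = Y ∪ X) ∧
    (∀ X Y Z : Set A, (X ∪ Y) ∪ Z = X ∪ (Y ∪ Z)) ∧
    (∀ X : Set A, X ∪ X = X) ∧
    (∀ X : Set A, X ∪ ∅ = X) ∧
    (∀ X : Set A, X ∪ Set.univ = Set.univ) ∧
    (∀ X Y : Set A, DownClosed add X → DownClosed add Y →
      prodOp add mul X Y = prodOp add mul Y X) ∧
    (∀ X Y Z : Set A, DownClosed add X → DownClosed add Y → DownClosed add Z →
      prodOp add mul (prodOp add mul X Y) Z = prodOp add mul X (prodOp add mul Y Z)) ∧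
    (∀ X Y Z : Set A, DownClosed add X → DownClosed add Y → DownClosed add Z →
      prodOp add mul X (Y ∪ Z) = prodOp add mul X Y ∪ prodOp add mul X Z) ∧
    (∀ X : Set A, DownClosed add X → prodOp add mul X Set.univ = X) ∧
    (∀ X : Set A, prodOp add mul X ∅ = ∅) := by

  obtain ⟨hac, haa, hai, haz, hao, hmc, hma, hmd, hmo, hmz⟩ := h
  have tr : ∀ v w u, add v w = w → add w u = u → add v u = u := by
    intro v w u h1 h2
    rw [← h2, ← haa, h1]
  have mono : ∀ a x y, add y x = x → add (mul a y) (mul a x) = mul a x := by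
    intro a x y hyx
    rw [← hmd, hyx]
  refine ⟨?_, ?_, ?_, ?_, ?_, ?_, ?_, ?_, ?_, ?_, ?_, ?_⟩
  · intro X Y hX hY w hw v hv
    rcases hw with hw | hw
    · exact Or.inl (hX w hw v hv)
    · exact Or.inr (hY w hw v hv)
  · rintro X Y _ _ w ⟨x, hx, y, hy, hle⟩ v hv
    exact ⟨x, hx, y, hy, tr v w _ hv hle⟩
  · exact fun X Y => Set.union_comm X Y
  · exact fun X Y Z => Set.union_assoc X Y Z
  · exact fun X => Set.union_self X
  · exact fun X => Set.union_empty X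
  · exact fun X => Set.union_univ X
  · intro X Y _ _
    ext w
    constructor
    · rintro ⟨x, hx, y, hy, hle⟩
      exact ⟨y, hy, x, hx, by rwa [hmc]⟩
    · rintro ⟨y, hy, x, hx, hle⟩
      exact ⟨x, hx, y, hy, by rwa [hmc]⟩
  · intro X Y Z _ _ _
    ext w
    constructor
    · rintro ⟨p, ⟨x, hx, y, hy, hp⟩, c, hc, hw⟩
      refine ⟨x, hx, mul y c, ⟨y, hy, c, hc, hai _⟩, ?_⟩
      have h1 : add (mul p c) (mul (mul x y) c) = mul (mul x y) c := by
        rw [hmc p c, hmc (mul x y) c]; exact mono c _ _ hp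
      have h2 := tr w _ _ hw h1
      rwa [hma] at h2
    · rintro ⟨x, hx, q, ⟨y, hy, c, hc, hq⟩, hw⟩
      refine ⟨mul x y, ⟨x, hx, y, hy, hai _⟩, c, hc, ?_⟩
      have h1 : add (mul x q) (mul x (mul y c)) = mul x (mul y c) := mono x _ _ hq
      have h2 := tr w _ _ hw h1
      rwa [← hma] at h2
  · intro X Y Z _ _ _
    ext w
    constructor
    · rintro ⟨x, hx, u, hu | hu, hle⟩
      · exact Or.inl ⟨x, hx, u, hu, hle⟩
      · exact Or.inr ⟨x, hx, u, hu, hle⟩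
    · rintro (⟨x, hx, y, hy, hle⟩ | ⟨x, hx, y, hy, hle⟩)
      · exact ⟨x, hx, y, Or.inl hy, hle⟩
      · exact ⟨x, hx, y, Or.inr hy, hle⟩
  · intro X hX
    ext w
    constructor
    · rintro ⟨x, hx, y, -, hle⟩
      have h1 : add (mul x y) (mul x o) = mul x o := mono x _ _ (hao y)
      rw [hmo] at h1
      exact hX x hx w (tr w _ _ hle h1)
    · intro hw
      exact ⟨w, hw, o, trivial, by rw [hmo]; exact hai w⟩
  · intro X
    ext w
    constructor
    · rintro ⟨x, -, y, hy, -⟩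
      exact hy.elim
    · exact fun hw => hw.elim
end

section
/- If S is a totally ordered c-semiring (i.e., ≤_S is a total order on A), then the map sending each nonempty downward-closed subset p of A that has a maximum element to its maximum is a semiring homomorphism from the subsemiring of such principal downward-closed sets of P^H(S) onto S; in particular for each a, b ∈ A, max(↓a ∪ ↓b) = a + b and max(↓a ×* ↓b) = a × b, where ↓x denotes the downward closure of {x}. -/
/-- If the c-semiring is totally ordered, then for principal downward-closed sets
↓a = {x | x ≤_S a}, the maximum of ↓a ∪ ↓b is a + b and the maximum of
↓a ×* ↓b is a × b (i.e., taking maxima is a semiring homomorphism onto S). -/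
theorem totallyOrdered_principal_max {A : Type*} (add mul : A → A → A) (z o : A)
    (h : IsCSemiring add mul z o)
    (htot : ∀ a b : A, add a b = b ∨ add b a = a) :
    ∀ a b : A,
      (add a b ∈ ({x | add x a = a} ∪ {x | add x b = b} : Set A) ∧
        ∀ x ∈ ({x | add x a = a} ∪ {x | add x b = b} : Set A),
          add x (add a b) = add a b) ∧
      (mul a b ∈ prodOp add mul {x | add x a = a} {x | add x b = b} ∧
        ∀ x ∈ prodOp add mul {x | add x a = a} {x | add x b = b},
          add x (mul a b) = mul a b) := by
  intro a b
  obtain ⟨hac, haa, hai, _, _, hmc, hma, hmd, _, _⟩ := h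
  -- transitivity of the induced order
  have trans : ∀ x y w : A, add x y = y → add y w = w → add x w = w := by
    intro x y w h1 h2
    calc add x w = add x (add y w) := by rw [h2]
      _ = add (add x y) w := (haa x y w).symm
      _ = add y w := by rw [h1]
      _ = w := h2
  refine ⟨⟨?_, ?_⟩, ⟨?_, ?_⟩⟩
  · rcases htot a b with hb | ha
    · right
      show add (add a b) b = b
      rw [haa, hai, hb]
    · left
      show add (add a b) a = a
      rw [hac a b, haa, hai, ha]
  · rintro x (hx | hx)
    · calc add x (add a b) = add (add x a) b := (haa x a b).symm
        _ = add a b := by rw [hx]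
    · calc add x (add a b) = add x (add b a) := by rw [hac a b]
        _ = add (add x b) a := (haa x b a).symm
        _ = add b a := by rw [hx]
        _ = add a b := hac b a
  · exact ⟨a, hai a, b, hai b, hai (mul a b)⟩
  · rintro x ⟨u, hu, v, hv, hx⟩
    -- mul u v ≤ mul a b
    have key : add (mul u v) (mul a b) = mul a b := by
      have expand : mul a b = add (mul u v) (add (mul a v) (add (mul u b) (mul a b))) := by
        calc mul a b = mul (add u a) (add v b) := by rw [hu, hv]
          _ = add (mul (add u a) v) (mul (add u a) b) := hmd _ _ _
          _ = add (add (mul v u) (mul v a)) (add (mul b u) (mul b a)) := by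
              rw [hmc (add u a) v, hmc (add u a) b, hmd, hmd]
          _ = add (add (mul u v) (mul a v)) (add (mul u b) (mul a b)) := by
              rw [hmc v u, hmc v a, hmc b u, hmc b a]
          _ = add (mul u v) (add (mul a v) (add (mul u b) (mul a b))) := haa _ _ _
      calc add (mul u v) (mul a b)
          = add (mul u v) (add (mul u v) (add (mul a v) (add (mul u b) (mul a b)))) := by
            rw [← expand]
        _ = add (add (mul u v) (mul u v)) (add (mul a v) (add (mul u b) (mul a b))) :=
            (haa _ _ _).symm
        _ = add (mul u v) (add (mul a v) (add (mul u b) (mul a b))) := by rw [hai]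
        _ = mul a b := expand.symm
    exact trans x (mul u v) (mul a b) hx key
end

section
/- In the Ordered Cartesian product S_f of two Weighted semirings with weights w₁, w₂ ∈ ℝ⁺, componentwise addition distributes over the selection operation f: ⟨a₁,b₁⟩ ×' (f(⟨a₂,b₂⟩, ⟨a₃,b₃⟩)) = f(⟨a₁,b₁⟩ ×' ⟨a₂,b₂⟩, ⟨a₁,b₁⟩ ×' ⟨a₃,b₃⟩), where ⟨a,b⟩ ×' ⟨c,d⟩ = ⟨a+c, b+d⟩. -/
/-- The selection operation f for pairs of nonnegative reals with weights w₁, w₂. -/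
noncomputable def fSel (w₁ w₂ : NNReal) (p q : NNReal × NNReal) : NNReal × NNReal :=
  if w₁ * p.1 + w₂ * p.2 > w₁ * q.1 + w₂ * q.2 then p
  else if w₁ * p.1 + w₂ * p.2 < w₁ * q.1 + w₂ * q.2 then q
  else (min p.1 q.1, min p.2 q.2)

/-- Componentwise addition distributes over the selection operation f. -/
theorem mul_distrib_fSel (w₁ w₂ : NNReal) :
    ∀ p q r : NNReal × NNReal,
      (p.1 + (fSel w₁ w₂ q r).1, p.2 + (fSel w₁ w₂ q r).2) =
        fSel w₁ w₂ (p.1 + q.1, p.2 + q.2) (p.1 + r.1, p.2 + r.2) := by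
  intro p q r
  have key : ∀ x y : NNReal × NNReal,
      (w₁ * (p.1 + x.1) + w₂ * (p.2 + x.2) > w₁ * (p.1 + y.1) + w₂ * (p.2 + y.2)) ↔
      (w₁ * x.1 + w₂ * x.2 > w₁ * y.1 + w₂ * y.2) := by
    intro x y
    have e1 : w₁ * (p.1 + x.1) + w₂ * (p.2 + x.2) =
        (w₁ * p.1 + w₂ * p.2) + (w₁ * x.1 + w₂ * x.2) := by ring
    have e2 : w₁ * (p.1 + y.1) + w₂ * (p.2 + y.2) =
        (w₁ * p.1 + w₂ * p.2) + (w₁ * y.1 + w₂ * y.2) := by ring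
    rw [e1, e2]
    exact add_lt_add_iff_left _
  simp only [fSel, key]
  rcases lt_trichotomy (w₁ * r.1 + w₂ * r.2) (w₁ * q.1 + w₂ * q.2) with h | h | h
  · rw [if_pos h, if_pos h]
  · rw [if_neg (by simp [h]), if_neg (by simp [h]), if_neg (by simp [h]), if_neg (by simp [h])]
    simp [← min_add_add_left]
  · rw [if_neg (by simp [le_of_lt h]), if_pos h, if_neg (by simp [le_of_lt h]), if_pos h]
end
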